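/- arXiv:1502.05095 — 4 statements merged into one kernel-verified Lean document; each statement's English description precedes it below -/
import Mathlib

section
/- A point (λ1,λ2,λ3) in the GHZ-polytope (convex hull of (1/2,1/2,1/2), (1/2,1/2,1), (1/2,1,1/2), (1,1/2,1/2), (1,1,1)) lies in the W-polytope (convex hull of (1,1,1), (1/2,1/2,1), (1/2,1,1/2), (1,1/2,1/2)) if and only if λ1 + λ2 + λ3 ≥ 2. -/
/-!
Every vertex of the GHZ polytope satisfies the three facet inequalities `xᵢ + xⱼ - xₖ ≤ 1`, hence
so does every point of it, and every vertex of the W polytope satisfies `x₀ + x₁ + x₂ ≥ 2`.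
Conversely, the W polytope is the simplex bounded by exactly these four hyperplanes: the four
slacks sum to `1` and are the barycentric coordinates of `x` with respect to its vertices, so
a point satisfying all four inequalities lies in it.
-/

open Matrix

section

variable {𝕜 ι : Type*} [Field 𝕜] [LinearOrder 𝕜] [IsStrictOrderedRing 𝕜] [Fintype ι]
  {s : Set (ι → 𝕜)} {a x : ι → 𝕜} {r : 𝕜}

theorem dotProduct_le_of_mem_convexHull (hs : ∀ y ∈ s, a ⬝ᵥ y ≤ r)
    (hx : x ∈ convexHull 𝕜 s) : a ⬝ᵥ x ≤ r :=
  convexHull_min hs (convex_halfSpace_le (dotProductBilin 𝕜 𝕜 a).isLinear r) hx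

theorem le_dotProduct_of_mem_convexHull (hs : ∀ y ∈ s, r ≤ a ⬝ᵥ y)
    (hx : x ∈ convexHull 𝕜 s) : r ≤ a ⬝ᵥ x :=
  convexHull_min hs (convex_halfSpace_ge (dotProductBilin 𝕜 𝕜 a).isLinear r) hx

end

abbrev ghzVertices : Set (Fin 3 → ℝ) :=
  {![1/2, 1/2, 1/2], ![1/2, 1/2, 1], ![1/2, 1, 1/2], ![1, 1/2, 1/2], ![1, 1, 1]}

abbrev wVertices : Set (Fin 3 → ℝ) :=
  {![1, 1, 1], ![1/2, 1/2, 1], ![1/2, 1, 1/2], ![1, 1/2, 1/2]}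

theorem facets_of_mem_convexHull_ghzVertices {x : Fin 3 → ℝ}
    (hx : x ∈ convexHull ℝ ghzVertices) :
    x 0 + x 1 - x 2 ≤ 1 ∧ x 0 - x 1 + x 2 ≤ 1 ∧ x 1 + x 2 - x 0 ≤ 1 := by
  have facet (a : Fin 3 → ℝ) (ha : ∀ y ∈ ghzVertices, a ⬝ᵥ y ≤ 1) : a ⬝ᵥ x ≤ 1 :=
    dotProduct_le_of_mem_convexHull ha hx
  have h₁ := facet ![1, 1, -1] (by norm_num [Set.forall_mem_insert])
  have h₂ := facet ![1, -1, 1] (by norm_num [Set.forall_mem_insert])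
  have h₃ := facet ![-1, 1, 1] (by norm_num [Set.forall_mem_insert])
  norm_num [dotProduct, Fin.sum_univ_three, cons_val_two, vecHead, vecTail] at h₁ h₂ h₃
  exact ⟨by linarith, by linarith, by linarith⟩

theorem two_le_sum_of_mem_convexHull_wVertices {x : Fin 3 → ℝ}
    (hx : x ∈ convexHull ℝ wVertices) : 2 ≤ x 0 + x 1 + x 2 := by
  have h := le_dotProduct_of_mem_convexHull (a := ![1, 1, 1]) (r := 2)
    (by norm_num [Set.forall_mem_insert]) hx
  simpa [dotProduct, Fin.sum_univ_three, cons_val_two, vecHead, vecTail] using h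

theorem mem_convexHull_wVertices {x : Fin 3 → ℝ} (hsum : 2 ≤ x 0 + x 1 + x 2)
    (h₁ : x 0 + x 1 - x 2 ≤ 1) (h₂ : x 0 - x 1 + x 2 ≤ 1) (h₃ : x 1 + x 2 - x 0 ≤ 1) :
    x ∈ convexHull ℝ wVertices := by
  -- The weight of a vertex is the slack of the facet inequality opposite to it.
  let w : Fin 4 → ℝ := ![x 0 + x 1 + x 2 - 2, 1 - (x 0 + x 1 - x 2),
    1 - (x 0 - x 1 + x 2), 1 - (x 1 + x 2 - x 0)]
  let z : Fin 4 → Fin 3 → ℝ := ![![1, 1, 1], ![1/2, 1/2, 1], ![1/2, 1, 1/2], ![1, 1/2, 1/2]]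
  have hx : x = ∑ i, w i • z i := by
    ext j
    fin_cases j <;>
      simp only [Finset.sum_apply, Pi.smul_apply, smul_eq_mul, Fin.sum_univ_four, w, z,
        Fin.zero_eta, Fin.mk_one, Fin.reduceFinMk, Fin.isValue, cons_val', cons_val_zero,
        cons_val_one, cons_val, cons_val_fin_one] <;>
      ring
  rw [hx]
  refine (convex_convexHull ℝ _).sum_mem (fun i _ => ?_) ?_ (fun i _ => subset_convexHull ℝ _ ?_)
  · fin_cases i <;>
      simp only [w, Fin.zero_eta, Fin.mk_one, Fin.reduceFinMk, Fin.isValue, cons_val_zero,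
        cons_val_one, cons_val, sub_nonneg] <;>
      linarith
  · simp only [Fin.sum_univ_four, w, Fin.isValue, cons_val_zero, cons_val_one, cons_val]
    ring
  · fin_cases i <;> simp [z]

theorem mem_W_iff_sum_ge_two (x : Fin 3 → ℝ)
    (hx : x ∈ convexHull ℝ
      ({![(1:ℝ)/2,1/2,1/2], ![1/2,1/2,1], ![1/2,1,1/2], ![1,1/2,1/2], ![1,1,1]} :
        Set (Fin 3 → ℝ))) :
    x ∈ convexHull ℝ
        ({![(1:ℝ),1,1], ![1/2,1/2,1], ![1/2,1,1/2], ![1,1/2,1/2]} : Set (Fin 3 → ℝ)) ↔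
      2 ≤ x 0 + x 1 + x 2 := by
  obtain ⟨h₁, h₂, h₃⟩ := facets_of_mem_convexHull_ghzVertices hx
  exact ⟨two_le_sum_of_mem_convexHull_wVertices, fun h => mem_convexHull_wVertices h h₁ h₂ h₃⟩
end

section
/- The polytope P_4 (convex hull of (1,1,1,1), (1/2,1/2,1,1), (1/2,1,1/2,1), (1/2,1,1,1/2), (1,1/2,1/2,1), (1,1/2,1,1/2), (1,1,1/2,1/2), (1/2,1/2,1/2,1/2)) equals the set of points λ in the full polytope P_7 (convex hull of P_4's vertices together with (1/2,1/2,1/2,1), (1/2,1/2,1,1/2), (1/2,1,1/2,1/2), (1,1/2,1/2,1/2)) satisfying −λ_i + λ_j + λ_k + λ_l ≥ 1 for all choices of distinct indices {i,j,k,l} = {1,2,3,4}. -/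
/-!
In the Hadamard coordinates `c₁ = ∑ xᵢ - 3`, `c₂ = x₀ + x₁ - x₂ - x₃`, `c₃ = x₀ - x₁ + x₂ - x₃`,
`c₄ = x₀ - x₁ - x₂ + x₃` one has `x = o + ∑ cₖ vₖ`, where `o = (3/4, 3/4, 3/4, 3/4)` and `vₖ` is
the `k`-th row of the Hadamard matrix divided by 4; the eight vertices of `P₄` are exactly `o ± vₖ`. So `P₄` is a cross-polytope, the set
`∑ |cₖ| ≤ 1`. Its sixteen facets `±c₁ ± c₂ ± c₃ ± c₄ ≤ 1` are the eight box inequalities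
`1/2 ≤ xᵢ ≤ 1` and the four inequalities `∑ x - 2 xᵢ ≤ 2`, all valid on `P₇`, together with the
four halfspaces `1 ≤ ∑ x - 2 xᵢ` of the statement.
-/

open Finset

theorem add_sum_smul_mem_convexHull_of_sum_abs_le_one {ι E : Type*} [Fintype ι] [Nonempty ι]
    [AddCommGroup E] [Module ℝ E] {s : Set E} {o : E} {v : ι → E}
    (hv : ∀ k, o + v k ∈ s ∧ o - v k ∈ s) {c : ι → ℝ} (hc : ∑ k, |c k| ≤ 1) :
    o + ∑ k, c k • v k ∈ convexHull ℝ s := by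
  have hconv := convex_convexHull ℝ s
  have hs := subset_convexHull ℝ s
  have ho : o ∈ convexHull ℝ s := by
    obtain ⟨k⟩ := ‹Nonempty ι›
    have hmid := hconv (hs (hv k).1) (hs (hv k).2) (by norm_num : (0 : ℝ) ≤ 1 / 2)
      (by norm_num : (0 : ℝ) ≤ 1 / 2) (by norm_num)
    convert hmid using 1
    module
  have hsign : ∀ k, o + (SignType.sign (c k) : ℝ) • v k ∈ convexHull ℝ s := by
    intro k
    rcases lt_trichotomy (c k) 0 with h | h | h
    · simpa [sign_neg h, ← sub_eq_add_neg] using hs (hv k).2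
    · simpa [h] using ho
    · simpa [sign_pos h] using hs (hv k).1
  -- `o + ∑ cₖ vₖ = (1 - ∑ |cₖ|) • o + ∑ |cₖ| • (o + sign cₖ • vₖ)`
  have hcomb := hconv.sum_mem (t := univ)
    (w := fun i : Option ι => i.elim (1 - ∑ k, |c k|) (|c ·|))
    (z := fun i => i.elim o fun k => o + (SignType.sign (c k) : ℝ) • v k)
    (by rintro (_ | k) - <;> simp [hc, abs_nonneg])
    (by simp [Fintype.sum_option])
    (by rintro (_ | k) - <;> simp [ho, hsign])
  convert hcomb using 1
  simp only [Fintype.sum_option, Option.elim, smul_add, sum_add_distrib, ← sum_smul, smul_smul,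
    abs_mul_sign]
  module

def verticesP4 : Set (Fin 4 → ℝ) :=
  {![1, 1, 1, 1], ![1/2, 1/2, 1, 1], ![1/2, 1, 1/2, 1], ![1/2, 1, 1, 1/2],
    ![1, 1/2, 1/2, 1], ![1, 1/2, 1, 1/2], ![1, 1, 1/2, 1/2], ![1/2, 1/2, 1/2, 1/2]}

def verticesP7 : Set (Fin 4 → ℝ) :=
  {![1, 1, 1, 1], ![1/2, 1/2, 1, 1], ![1/2, 1, 1/2, 1], ![1/2, 1, 1, 1/2],
    ![1, 1/2, 1/2, 1], ![1, 1/2, 1, 1/2], ![1, 1, 1/2, 1/2], ![1/2, 1/2, 1/2, 1/2],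
    ![1/2, 1/2, 1/2, 1], ![1/2, 1/2, 1, 1/2], ![1/2, 1, 1/2, 1/2], ![1, 1/2, 1/2, 1/2]}

def facetForm (x : Fin 4 → ℝ) (i : Fin 4) : ℝ := x 0 + x 1 + x 2 + x 3 - 2 * x i

theorem isLinearMap_facetForm (i : Fin 4) : IsLinearMap ℝ (facetForm · i) :=
  ⟨fun x y => by simp only [facetForm, Pi.add_apply]; ring,
    fun a x => by simp only [facetForm, Pi.smul_apply, smul_eq_mul]; ring⟩

theorem verticesP4_subset_verticesP7 : verticesP4 ⊆ verticesP7 := by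
  intro y hy
  simp only [verticesP4, verticesP7, Set.mem_insert_iff, Set.mem_singleton_iff] at hy ⊢
  tauto

theorem convexHull_verticesP4_subset :
    convexHull ℝ verticesP4 ⊆ {x | ∀ i, 1 ≤ facetForm x i} := by
  refine convexHull_min ?_ ?_
  · intro y hy i
    simp only [verticesP4, Set.mem_insert_iff, Set.mem_singleton_iff] at hy
    rcases hy with rfl | rfl | rfl | rfl | rfl | rfl | rfl | rfl <;>
      fin_cases i <;> norm_num [facetForm, Matrix.cons_val_two, Matrix.cons_val_three]
  · simpa only [Set.ofPred_forall] using
      convex_iInter fun i => convex_halfSpace_ge (isLinearMap_facetForm i) 1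

theorem convexHull_verticesP7_subset :
    convexHull ℝ verticesP7 ⊆ {x | ∀ i, 1/2 ≤ x i ∧ x i ≤ 1 ∧ facetForm x i ≤ 2} := by
  refine convexHull_min ?_ ?_
  · intro y hy i
    simp only [verticesP7, Set.mem_insert_iff, Set.mem_singleton_iff] at hy
    rcases hy with rfl | rfl | rfl | rfl | rfl | rfl | rfl | rfl | rfl | rfl | rfl | rfl <;>
      fin_cases i <;> norm_num [facetForm, Matrix.cons_val_two, Matrix.cons_val_three]
  · simp only [Set.ofPred_forall, Set.ofPred_and]
    exact convex_iInter fun i =>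
      (convex_halfSpace_ge (LinearMap.proj (R := ℝ) i).isLinear _).inter <|
        (convex_halfSpace_le (LinearMap.proj (R := ℝ) i).isLinear _).inter <|
          convex_halfSpace_le (isLinearMap_facetForm i) _

theorem mem_convexHull_verticesP4 {x : Fin 4 → ℝ}
    (hbox : ∀ i, 1/2 ≤ x i ∧ x i ≤ 1) (hupper : ∀ i, facetForm x i ≤ 2)
    (hlower : ∀ i, 1 ≤ facetForm x i) : x ∈ convexHull ℝ verticesP4 := by
  set c : Fin 4 → ℝ := ![x 0 + x 1 + x 2 + x 3 - 3, x 0 + x 1 - x 2 - x 3,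
    x 0 - x 1 + x 2 - x 3, x 0 - x 1 - x 2 + x 3]
  set v : Fin 4 → Fin 4 → ℝ := ![![1/4, 1/4, 1/4, 1/4], ![1/4, 1/4, -1/4, -1/4],
    ![1/4, -1/4, 1/4, -1/4], ![1/4, -1/4, -1/4, 1/4]]
  have hx : x = ![3/4, 3/4, 3/4, 3/4] + ∑ k, c k • v k := by
    funext j
    fin_cases j <;>
      simp only [Fin.zero_eta, Fin.mk_one, Fin.reduceFinMk, Fin.isValue, Pi.add_apply,
        Fin.sum_univ_four, Matrix.smul_cons, smul_eq_mul, Matrix.smul_empty, Matrix.add_cons,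
        Matrix.head_cons, Matrix.tail_cons, Matrix.empty_add_empty, Matrix.cons_val_zero,
        Matrix.cons_val_one, Matrix.cons_val, c, v] <;>
      ring
  have hc : ∑ k, |c k| ≤ 1 := by
    simp only [facetForm] at hupper hlower
    simp only [Fin.sum_univ_four, c, Matrix.cons_val]
    -- the sixteen sign choices in `|c₁| + |c₂| + |c₃| + |c₄|` are the sixteen facet inequalities
    rcases abs_cases (x 0 + x 1 + x 2 + x 3 - 3) with ⟨e1, -⟩ | ⟨e1, -⟩ <;>
    rcases abs_cases (x 0 + x 1 - x 2 - x 3) with ⟨e2, -⟩ | ⟨e2, -⟩ <;>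
    rcases abs_cases (x 0 - x 1 + x 2 - x 3) with ⟨e3, -⟩ | ⟨e3, -⟩ <;>
    rcases abs_cases (x 0 - x 1 - x 2 + x 3) with ⟨e4, -⟩ | ⟨e4, -⟩ <;>
    rw [e1, e2, e3, e4] <;>
    linarith [hbox 0, hbox 1, hbox 2, hbox 3, hupper 0, hupper 1, hupper 2, hupper 3,
      hlower 0, hlower 1, hlower 2, hlower 3]
  rw [hx]
  refine add_sum_smul_mem_convexHull_of_sum_abs_le_one (fun k => ?_) hc
  fin_cases k <;> norm_num [v, verticesP4, eq_iff_true_of_subsingleton]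

theorem P4_eq_P7_inter_halfspaces :
    convexHull ℝ
        ({![(1:ℝ),1,1,1], ![1/2,1/2,1,1], ![1/2,1,1/2,1], ![1/2,1,1,1/2],
           ![1,1/2,1/2,1], ![1,1/2,1,1/2], ![1,1,1/2,1/2], ![1/2,1/2,1/2,1/2]} :
          Set (Fin 4 → ℝ)) =
      {x : Fin 4 → ℝ |
        x ∈ convexHull ℝ
          ({![(1:ℝ),1,1,1], ![1/2,1/2,1,1], ![1/2,1,1/2,1], ![1/2,1,1,1/2],
             ![1,1/2,1/2,1], ![1,1/2,1,1/2], ![1,1,1/2,1/2], ![1/2,1/2,1/2,1/2],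
             ![1/2,1/2,1/2,1], ![1/2,1/2,1,1/2], ![1/2,1,1/2,1/2], ![1,1/2,1/2,1/2]} :
            Set (Fin 4 → ℝ)) ∧
        ∀ i : Fin 4, 1 ≤ (x 0 + x 1 + x 2 + x 3) - 2 * x i} := by
  show convexHull ℝ verticesP4 = {x | x ∈ convexHull ℝ verticesP7 ∧ ∀ i, 1 ≤ facetForm x i}
  ext x
  refine ⟨fun hx => ⟨convexHull_mono verticesP4_subset_verticesP7 hx,
    convexHull_verticesP4_subset hx⟩, fun ⟨hx, hlower⟩ => ?_⟩
  have hP7 := convexHull_verticesP7_subset hx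
  exact mem_convexHull_verticesP4 (fun i => ⟨(hP7 i).1, (hP7 i).2.1⟩) (fun i => (hP7 i).2.2)
    hlower
end

section
/- The intersection of the polytope P_4 ⊆ R^4 with the hyperplane λ1 = 1 is the convex hull of (1,1,1,1), (1,1/2,1/2,1), (1,1/2,1,1/2), (1,1,1/2,1/2); that is, its projection to the last three coordinates equals the three-qubit W-polytope, the convex hull of (1,1,1), (1/2,1/2,1), (1/2,1,1/2), (1,1/2,1/2). -/
/-!
All eight vertices of `P_4` satisfy `λ₁ ≤ 1`, so `λ₁ = 1` is a supporting hyperplane and its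
intersection with `P_4` is the face spanned by the vertices lying on it, namely the four listed
ones. A convex combination lands on the hyperplane only if every vertex with positive weight does,
since the defect `∑ wᵢ (1 - λ₁(zᵢ))` is a sum of nonnegative terms. Deleting the coordinate
`λ₁` is linear, so it carries this face onto the convex hull of the projected vertices.
-/

open Finset in
theorem sep_convexHull_eq_convexHull_sep_of_le {𝕜 E : Type*} [Field 𝕜] [LinearOrder 𝕜]
    [IsStrictOrderedRing 𝕜] [AddCommGroup E] [Module 𝕜 E] (f : E →ₗ[𝕜] 𝕜) {s : Set E} {c : 𝕜}
    (hs : ∀ y ∈ s, f y ≤ c) :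
    {x ∈ convexHull 𝕜 s | f x = c} = convexHull 𝕜 {y ∈ s | f y = c} := by
  refine subset_antisymm ?_ <|
    convexHull_min (fun y hy ↦ ⟨subset_convexHull 𝕜 s hy.1, hy.2⟩)
      ((convex_convexHull 𝕜 s).inter (convex_hyperplane f.isLinear c))
  rintro x ⟨hx, hfx⟩
  rw [_root_.convexHull_eq] at hx
  obtain ⟨ι, t, w, z, hw₀, hw₁, hz, rfl⟩ := hx
  have hdefect : ∑ i ∈ t, w i * (c - f (z i)) = 0 := by
    rw [centerMass_eq_of_sum_1 _ _ hw₁, map_sum] at hfx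
    simp only [map_smul, smul_eq_mul] at hfx
    simp only [mul_sub, sum_sub_distrib, ← sum_mul, hw₁, hfx, one_mul, sub_self]
  have hon : ∀ i ∈ t, w i ≠ 0 → f (z i) = c := fun i hi hwi ↦ by
    have hterm := (sum_eq_zero_iff_of_nonneg fun j hj ↦
      mul_nonneg (hw₀ j hj) (sub_nonneg.2 (hs _ (hz j hj)))).1 hdefect i hi
    exact (sub_eq_zero.1 ((mul_eq_zero.1 hterm).resolve_left hwi)).symm
  classical
  rw [← centerMass_filter_ne_zero]
  refine centerMass_mem_convexHull _ (fun i hi ↦ hw₀ i (mem_filter.1 hi).1) ?_ fun i hi ↦ ?_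
  · rw [sum_filter_ne_zero, hw₁]
    exact one_pos
  · obtain ⟨hi, hwi⟩ := mem_filter.1 hi
    exact ⟨hz i hi, hon i hi hwi⟩

theorem P4_slice_lambda1_eq_one :
    ({x : Fin 4 → ℝ |
        x ∈ convexHull ℝ
          ({![(1:ℝ),1,1,1], ![1/2,1/2,1,1], ![1/2,1,1/2,1], ![1/2,1,1,1/2],
             ![1,1/2,1/2,1], ![1,1/2,1,1/2], ![1,1,1/2,1/2], ![1/2,1/2,1/2,1/2]} :
            Set (Fin 4 → ℝ)) ∧ x 0 = 1} =
      convexHull ℝ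
        ({![(1:ℝ),1,1,1], ![1,1/2,1/2,1], ![1,1/2,1,1/2], ![1,1,1/2,1/2]} :
          Set (Fin 4 → ℝ))) ∧
    ((fun x : Fin 4 → ℝ => ![x 1, x 2, x 3]) ''
        {x : Fin 4 → ℝ |
          x ∈ convexHull ℝ
            ({![(1:ℝ),1,1,1], ![1/2,1/2,1,1], ![1/2,1,1/2,1], ![1/2,1,1,1/2],
               ![1,1/2,1/2,1], ![1,1/2,1,1/2], ![1,1,1/2,1/2], ![1/2,1/2,1/2,1/2]} :
              Set (Fin 4 → ℝ)) ∧ x 0 = 1} =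
      convexHull ℝ
        ({![(1:ℝ),1,1], ![1/2,1/2,1], ![1/2,1,1/2], ![1,1/2,1/2]} : Set (Fin 3 → ℝ))) := by
  set P4 : Set (Fin 4 → ℝ) :=
    {![(1:ℝ),1,1,1], ![1/2,1/2,1,1], ![1/2,1,1/2,1], ![1/2,1,1,1/2],
      ![1,1/2,1/2,1], ![1,1/2,1,1/2], ![1,1,1/2,1/2], ![1/2,1/2,1/2,1/2]}
  set W : Set (Fin 4 → ℝ) := {![(1:ℝ),1,1,1], ![1,1/2,1/2,1], ![1,1/2,1,1/2], ![1,1,1/2,1/2]}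
  have hverts : {y ∈ P4 | y 0 = 1} = W := by
    ext y
    simp only [P4, W, Set.mem_ofPred, Set.mem_insert_iff, Set.mem_singleton_iff]
    constructor
    · rintro ⟨rfl | rfl | rfl | rfl | rfl | rfl | rfl | rfl, h⟩ <;> norm_num at h <;> simp
    · rintro (rfl | rfl | rfl | rfl) <;> norm_num
  have hface : {x ∈ convexHull ℝ P4 | x 0 = 1} = convexHull ℝ W := by
    rw [← hverts]
    exact sep_convexHull_eq_convexHull_sep_of_le
      (LinearMap.proj (R := ℝ) (φ := fun _ : Fin 4 ↦ ℝ) 0) (by norm_num [P4])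
  refine ⟨hface, ?_⟩
  have hproj : IsLinearMap ℝ (fun x : Fin 4 → ℝ => ![x 1, x 2, x 3]) :=
    ⟨fun a b ↦ by ext i; fin_cases i <;> rfl, fun c a ↦ by ext i; fin_cases i <;> rfl⟩
  rw [hface, hproj.image_convexHull]
  simp [W, Set.image_insert_eq]
end

section
/- For the four-qubit state |Ψ⟩ = (√3/3)(|0000⟩+|1111⟩) + (√3/6)(|01⟩+|10⟩)⊗(|01⟩+|10⟩), the state is normalized, and each single-qubit reduced density matrix equals (1/2)·I, so the vector of maximal local eigenvalues is (1/2,1/2,1/2,1/2). -/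
/-- Amplitudes of the state (√3/3)(|0000⟩+|1111⟩) + (√3/6)(|01⟩+|10⟩)⊗(|01⟩+|10⟩). -/
noncomputable def psi1 : Fin 2 → Fin 2 → Fin 2 → Fin 2 → ℂ := fun a b c d =>
  if (a = 0 ∧ b = 0 ∧ c = 0 ∧ d = 0) ∨ (a = 1 ∧ b = 1 ∧ c = 1 ∧ d = 1) then
    (Real.sqrt 3 / 3 : ℝ)
  else if a ≠ b ∧ c ≠ d then (Real.sqrt 3 / 6 : ℝ)
  else 0

noncomputable def redPsi1_1 : Matrix (Fin 2) (Fin 2) ℂ :=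
  Matrix.of fun a a' => ∑ b, ∑ c, ∑ d, psi1 a b c d * star (psi1 a' b c d)

noncomputable def redPsi1_2 : Matrix (Fin 2) (Fin 2) ℂ :=
  Matrix.of fun b b' => ∑ a, ∑ c, ∑ d, psi1 a b c d * star (psi1 a b' c d)

noncomputable def redPsi1_3 : Matrix (Fin 2) (Fin 2) ℂ :=
  Matrix.of fun c c' => ∑ a, ∑ b, ∑ d, psi1 a b c d * star (psi1 a b c' d)

noncomputable def redPsi1_4 : Matrix (Fin 2) (Fin 2) ℂ :=
  Matrix.of fun d d' => ∑ a, ∑ b, ∑ c, psi1 a b c d * star (psi1 a b c d')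

lemma sqrt3_sq : (Real.sqrt 3) * (Real.sqrt 3) = 3 :=
  Real.mul_self_sqrt (by norm_num)

theorem psi1_normalized_and_local_spectra :
    (∑ a, ∑ b, ∑ c, ∑ d, Complex.normSq (psi1 a b c d)) = 1 ∧
    redPsi1_1 = (1/2 : ℂ) • 1 ∧ redPsi1_2 = (1/2 : ℂ) • 1 ∧
      redPsi1_3 = (1/2 : ℂ) • 1 ∧ redPsi1_4 = (1/2 : ℂ) • 1 := by
  refine ⟨?_, ?_, ?_, ?_, ?_⟩
  · simp only [psi1, Fin.sum_univ_two]
    norm_num [Complex.normSq_ofReal]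
  all_goals
  · ext i j
    fin_cases i <;> fin_cases j <;>
      simp only [redPsi1_1, redPsi1_2, redPsi1_3, redPsi1_4, psi1, Matrix.of_apply,
        Fin.sum_univ_two, Matrix.smul_apply, Matrix.one_apply, Fin.isValue] <;>
      norm_num <;>
      · have h : ((Real.sqrt 3 : ℝ) : ℂ) * ((Real.sqrt 3 : ℝ) : ℂ) = 3 := by
          rw [← Complex.ofReal_mul, sqrt3_sq]; norm_num
        push_cast
        linear_combination h/6
end
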